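/- arXiv:1407.2628 — 5 statements merged into one kernel-verified Lean document; each statement's English description precedes it below -/
import Mathlib

section
/- Fix a point (Q⁰,q⁰) with each Q⁰_i Hermitian positive semidefinite and each q⁰_j ≥ 0, and set ϑ_i = σ² + ∑_{k≠i} h_{D,i}^H Q⁰_k h_{D,i} + ∑_{j} q⁰_j c_{ji} for i = 1,…,K_D and Θ = σ² I + ∑_{k=1}^{K_D} H_SI Q⁰_k H_SI^H. Define the affine function ĝ(Q,q) = g(Q⁰,q⁰) + ∑_{i=1}^{K_D} ∑_{k≠i} ϑ_i^{-1} · h_{D,i}^H (Q_k − Q⁰_k) h_{D,i} + ∑_{i=1}^{K_D} ∑_{j=1}^{K_U} ϑ_i^{-1} c_{ji} (q_j − q⁰_j) + ∑_{i=1}^{K_D} tr(H_SI^H Θ^{-1} H_SI (Q_i − Q⁰_i)) (all summands are real because the matrices involved are Hermitian). Then g(Q,q) ≤ ĝ(Q,q) for every tuple Q of N_T×N_T Hermitian positive semidefinite matrices and every tuple q of nonnegative reals, with equality when (Q,q) = (Q⁰,q⁰). -/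
open Matrix Finset ComplexOrder

/-- The function `g(Q,q)` from the MAXDET reformulation. -/
noncomputable def gFun {NT NR KD KU : ℕ} (σsq : ℝ)
    (HSI : Matrix (Fin NR) (Fin NT) ℂ)
    (hD : Fin KD → (Fin NT → ℂ))
    (c : Fin KU → Fin KD → ℝ)
    (p : (Fin KD → Matrix (Fin NT) (Fin NT) ℂ) × (Fin KU → ℝ)) : ℝ :=
  (∑ i, Real.log (σsq +
      (∑ k ∈ Finset.univ.filter (fun k => k ≠ i),
        (star (hD i) ⬝ᵥ (p.1 k).mulVec (hD i)).re)
      + ∑ j, p.2 j * c j i))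
  + Real.log (((σsq : ℂ) • (1 : Matrix (Fin NR) (Fin NR) ℂ) +
      ∑ i, HSI * p.1 i * HSIᴴ).det.re)

/-- The coefficients `ϑ_i` of the affine majorant of `g` at `(Q⁰, q⁰)`. -/
noncomputable def thetaCoef {NT NR KD KU : ℕ} (σsq : ℝ)
    (HSI : Matrix (Fin NR) (Fin NT) ℂ)
    (hD : Fin KD → (Fin NT → ℂ)) (c : Fin KU → Fin KD → ℝ)
    (Q0 : Fin KD → Matrix (Fin NT) (Fin NT) ℂ) (q0 : Fin KU → ℝ)
    (i : Fin KD) : ℝ :=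
  σsq + (∑ k ∈ Finset.univ.filter (fun k => k ≠ i),
      (star (hD i) ⬝ᵥ (Q0 k).mulVec (hD i)).re)
    + ∑ j, q0 j * c j i

/-- The matrix `Θ = σ² I + ∑ₖ H_SI Q⁰ₖ H_SIᴴ`. -/
noncomputable def ThetaMat {NT NR KD : ℕ} (σsq : ℝ)
    (HSI : Matrix (Fin NR) (Fin NT) ℂ)
    (Q0 : Fin KD → Matrix (Fin NT) (Fin NT) ℂ) :
    Matrix (Fin NR) (Fin NR) ℂ :=
  (σsq : ℂ) • (1 : Matrix (Fin NR) (Fin NR) ℂ) + ∑ k, HSI * Q0 k * HSIᴴ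

/-- The affine majorant `ĝ(Q,q)` of `g` at the expansion point `(Q⁰, q⁰)`. -/
noncomputable def gHat {NT NR KD KU : ℕ} (σsq : ℝ)
    (HSI : Matrix (Fin NR) (Fin NT) ℂ)
    (hD : Fin KD → (Fin NT → ℂ)) (c : Fin KU → Fin KD → ℝ)
    (Q0 : Fin KD → Matrix (Fin NT) (Fin NT) ℂ) (q0 : Fin KU → ℝ)
    (p : (Fin KD → Matrix (Fin NT) (Fin NT) ℂ) × (Fin KU → ℝ)) : ℝ :=
  gFun σsq HSI hD c (Q0, q0)
  + (∑ i, ∑ k ∈ Finset.univ.filter (fun k => k ≠ i),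
      (thetaCoef σsq HSI hD c Q0 q0 i)⁻¹ *
        (star (hD i) ⬝ᵥ (p.1 k - Q0 k).mulVec (hD i)).re)
  + (∑ i, ∑ j, (thetaCoef σsq HSI hD c Q0 q0 i)⁻¹ * c j i * (p.2 j - q0 j))
  + ∑ i : Fin KD,
      ((HSIᴴ * (ThetaMat σsq HSI Q0)⁻¹ * HSI * (p.1 i - Q0 i)).trace).re

/-! `g` is concave: a sum of logarithms of affine functions of `(Q, q)` plus the log-determinant
of an affine matrix function of `Q`; `ĝ` is its tangent plane at `(Q⁰, q⁰)`. For the scalar terms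
this is `log b ≤ log a + (b - a) / a`. For the matrix term, with `R = A^{-1/2}` the matrix `R B R`
is positive definite with determinant `det B / det A` and trace `tr (A⁻¹ B)`, and summing
`log λ ≤ λ - 1` over its eigenvalues gives `log det B ≤ log det A + tr (A⁻¹ (B - A))`. -/

theorem Real.log_le_log_add_inv_mul_sub {a b : ℝ} (ha : 0 < a) (hb : 0 < b) :
    Real.log b ≤ Real.log a + a⁻¹ * (b - a) := by
  have h := Real.log_le_sub_one_of_pos (div_pos hb ha)
  rw [Real.log_div hb.ne' ha.ne'] at h
  have : b / a - 1 = a⁻¹ * (b - a) := by field_simp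
  linarith

namespace Matrix

variable {n 𝕜 : Type*} [Fintype n] [DecidableEq n] [RCLike 𝕜]

open RCLike in
theorem PosDef.log_re_det_le_re_trace_sub_card {M : Matrix n n 𝕜} (hM : M.PosDef) :
    Real.log (re M.det) ≤ re M.trace - Fintype.card n := by
  have hdet : re M.det = ∏ i, hM.1.eigenvalues i := by
    rw [hM.1.det_eq_prod_eigenvalues, ← ofReal_prod, ofReal_re]
  have htr : re M.trace = ∑ i, hM.1.eigenvalues i := by
    rw [hM.1.trace_eq_sum_eigenvalues, ← ofReal_sum, ofReal_re]
  rw [hdet, htr, Real.log_prod fun i _ => (hM.eigenvalues_pos i).ne']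
  calc ∑ i, Real.log (hM.1.eigenvalues i) ≤ ∑ i, (hM.1.eigenvalues i - 1) :=
        sum_le_sum fun i _ => Real.log_le_sub_one_of_pos (hM.eigenvalues_pos i)
    _ = ∑ i, hM.1.eigenvalues i - Fintype.card n := by simp [sum_sub_distrib]

open RCLike MatrixOrder in
theorem PosDef.log_re_det_le {A B : Matrix n n 𝕜} (hA : A.PosDef) (hB : B.PosDef) :
    Real.log (re B.det) ≤ Real.log (re A.det) + re (A⁻¹ * (B - A)).trace := by
  obtain ⟨a, ha, hAa⟩ := pos_iff_exists_ofReal.mp hA.det_pos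
  obtain ⟨b, hb, hBb⟩ := pos_iff_exists_ofReal.mp hB.det_pos
  have hAunit : IsUnit A.det := by rw [← hAa]; exact (ofReal_ne_zero.mpr ha.ne').isUnit
  set R := CFC.sqrt A⁻¹
  have hRR : R * R = A⁻¹ := CFC.sqrt_mul_sqrt_self _ hA.inv.posSemidef.nonneg
  have hR : IsUnit R := by
    rw [isUnit_iff_isUnit_det]
    refine isUnit_of_mul_isUnit_left (y := R.det) ?_
    rw [← det_mul, hRR]
    exact isUnit_nonsing_inv_det A hAunit
  have hM : (R * B * R).PosDef := by
    have h := hB.conjTranspose_mul_mul_same (mulVec_injective_of_isUnit hR)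
    rwa [(CFC.sqrt_nonneg A⁻¹).posSemidef.isHermitian.eq] at h
  have hdet : re (R * B * R).det = b / a := by
    rw [det_mul, det_mul, mul_right_comm, ← det_mul, hRR, det_nonsing_inv, Ring.inverse_eq_inv,
      ← hAa, ← hBb, ← ofReal_inv, ← ofReal_mul, ofReal_re]
    ring
  have htr : (R * B * R).trace = (A⁻¹ * B).trace := by
    rw [trace_mul_comm, ← mul_assoc, hRR]
  have key := hM.log_re_det_le_re_trace_sub_card
  rw [hdet, Real.log_div hb.ne' ha.ne', htr] at key
  rw [← hAa, ← hBb, ofReal_re, ofReal_re, Matrix.mul_sub, trace_sub, nonsing_inv_mul A hAunit,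
    trace_one, map_sub, natCast_re]
  linarith

end Matrix

section Majorant

variable {NT NR KD KU : ℕ} {σsq : ℝ} {HSI : Matrix (Fin NR) (Fin NT) ℂ}
  {hD : Fin KD → (Fin NT → ℂ)} {c : Fin KU → Fin KD → ℝ}

theorem thetaCoef_pos (hσ : 0 < σsq) (hc : ∀ j i, 0 ≤ c j i)
    {Q : Fin KD → Matrix (Fin NT) (Fin NT) ℂ} (hQ : ∀ i, (Q i).PosSemidef)
    {q : Fin KU → ℝ} (hq : ∀ j, 0 ≤ q j) (i : Fin KD) :
    0 < thetaCoef σsq HSI hD c Q q i := by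
  have hinterf : 0 ≤ ∑ k ∈ univ.filter (fun k => k ≠ i), (star (hD i) ⬝ᵥ (Q k) *ᵥ (hD i)).re :=
    sum_nonneg fun k _ => (hQ k).re_dotProduct_nonneg (hD i)
  have huplink : 0 ≤ ∑ j, q j * c j i := sum_nonneg fun j _ => mul_nonneg (hq j) (hc j i)
  unfold thetaCoef
  linarith

theorem thetaCoef_sub_thetaCoef (Q Q0 : Fin KD → Matrix (Fin NT) (Fin NT) ℂ)
    (q q0 : Fin KU → ℝ) (i : Fin KD) :
    thetaCoef σsq HSI hD c Q q i - thetaCoef σsq HSI hD c Q0 q0 i =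
      ∑ k ∈ univ.filter (fun k => k ≠ i), (star (hD i) ⬝ᵥ (Q k - Q0 k) *ᵥ (hD i)).re
        + ∑ j, c j i * (q j - q0 j) := by
  simp only [thetaCoef, sub_mulVec, dotProduct_sub, Complex.sub_re, sum_sub_distrib, mul_sub]
  simp only [mul_comm (c _ i)]
  ring

variable (HSI) in
theorem thetaMat_posDef (hσ : 0 < σsq)
    {Q : Fin KD → Matrix (Fin NT) (Fin NT) ℂ} (hQ : ∀ i, (Q i).PosSemidef) :
    (ThetaMat σsq HSI Q).PosDef := by
  refine PosDef.add_posSemidef ?_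
    (posSemidef_sum _ fun i _ => (hQ i).mul_mul_conjTranspose_same HSI)
  rw [smul_one_eq_diagonal]
  exact posDef_diagonal_iff.mpr fun _ => by exact_mod_cast hσ

theorem thetaMat_sub_thetaMat (Q Q0 : Fin KD → Matrix (Fin NT) (Fin NT) ℂ) :
    ThetaMat σsq HSI Q - ThetaMat σsq HSI Q0 = ∑ i, HSI * (Q i - Q0 i) * HSIᴴ := by
  simp only [ThetaMat, add_sub_add_left_eq_sub, ← sum_sub_distrib, Matrix.mul_sub, Matrix.sub_mul]

theorem gFun_eq_sum_log_thetaCoef (Q : Fin KD → Matrix (Fin NT) (Fin NT) ℂ) (q : Fin KU → ℝ) :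
    gFun σsq HSI hD c (Q, q) =
      ∑ i, Real.log (thetaCoef σsq HSI hD c Q q i) + Real.log (ThetaMat σsq HSI Q).det.re :=
  rfl

theorem gHat_eq_gFun_add (Q0 Q : Fin KD → Matrix (Fin NT) (Fin NT) ℂ) (q0 q : Fin KU → ℝ) :
    gHat σsq HSI hD c Q0 q0 (Q, q) = gFun σsq HSI hD c (Q0, q0)
      + ∑ i, (thetaCoef σsq HSI hD c Q0 q0 i)⁻¹ *
          (thetaCoef σsq HSI hD c Q q i - thetaCoef σsq HSI hD c Q0 q0 i)
      + ((ThetaMat σsq HSI Q0)⁻¹ * (ThetaMat σsq HSI Q - ThetaMat σsq HSI Q0)).trace.re := by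
  have hscalar : ∀ i, (thetaCoef σsq HSI hD c Q0 q0 i)⁻¹ *
      (thetaCoef σsq HSI hD c Q q i - thetaCoef σsq HSI hD c Q0 q0 i) =
      ∑ k ∈ univ.filter (fun k => k ≠ i), (thetaCoef σsq HSI hD c Q0 q0 i)⁻¹ *
          (star (hD i) ⬝ᵥ (Q k - Q0 k) *ᵥ (hD i)).re
        + ∑ j, (thetaCoef σsq HSI hD c Q0 q0 i)⁻¹ * c j i * (q j - q0 j) := by
    intro i
    simp only [thetaCoef_sub_thetaCoef, mul_add, mul_sum, mul_assoc]
  have hmatrix : ((ThetaMat σsq HSI Q0)⁻¹ * (ThetaMat σsq HSI Q - ThetaMat σsq HSI Q0)).trace =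
      ∑ i, (HSIᴴ * (ThetaMat σsq HSI Q0)⁻¹ * HSI * (Q i - Q0 i)).trace := by
    rw [thetaMat_sub_thetaMat, mul_sum, trace_sum]
    refine sum_congr rfl fun i _ => ?_
    rw [← Matrix.mul_assoc, trace_mul_cycle, Matrix.mul_assoc _ HSI]
  rw [gHat, hmatrix, Complex.re_sum, sum_congr rfl fun i _ => hscalar i, sum_add_distrib]
  ring

end Majorant

/-- The affine function `ĝ` obtained by first-order approximation of the
concave function `g` at `(Q⁰, q⁰)` majorizes `g` on the set of Hermitian PSD
tuples and nonnegative powers, with equality at the expansion point. -/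
theorem gFun_le_gHat {NT NR KD KU : ℕ} (σsq : ℝ) (hσ : 0 < σsq)
    (HSI : Matrix (Fin NR) (Fin NT) ℂ)
    (hD : Fin KD → (Fin NT → ℂ))
    (c : Fin KU → Fin KD → ℝ) (hc : ∀ j i, 0 ≤ c j i)
    (Q0 : Fin KD → Matrix (Fin NT) (Fin NT) ℂ) (hQ0 : ∀ i, (Q0 i).PosSemidef)
    (q0 : Fin KU → ℝ) (hq0 : ∀ j, 0 ≤ q0 j) :
    (∀ (Q : Fin KD → Matrix (Fin NT) (Fin NT) ℂ) (q : Fin KU → ℝ),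
      (∀ i, (Q i).PosSemidef) → (∀ j, 0 ≤ q j) →
        gFun σsq HSI hD c (Q, q) ≤ gHat σsq HSI hD c Q0 q0 (Q, q)) ∧
    gHat σsq HSI hD c Q0 q0 (Q0, q0) = gFun σsq HSI hD c (Q0, q0) := by
  refine ⟨fun Q q hQ hq => ?_, by simp [gHat_eq_gFun_add]⟩
  have hscalar := sum_le_sum fun i (_ : i ∈ univ) =>
    Real.log_le_log_add_inv_mul_sub (thetaCoef_pos (HSI := HSI) (hD := hD) hσ hc hQ0 hq0 i)
      (thetaCoef_pos (HSI := HSI) (hD := hD) hσ hc hQ hq i)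
  have hmatrix := (thetaMat_posDef HSI hσ hQ0).log_re_det_le (thetaMat_posDef HSI hσ hQ)
  rw [sum_add_distrib] at hscalar
  rw [gHat_eq_gFun_add, gFun_eq_sum_log_thetaCoef, gFun_eq_sum_log_thetaCoef]
  simp only [RCLike.re_to_complex] at hmatrix
  linarith
end

section
/- Let σ² > 0, let H be a complex N_R×N_T matrix, and let Q and Q₀ be N_T×N_T Hermitian positive semidefinite complex matrices. Then log det(σ² I + H Q H^H) ≤ log det(σ² I + H Q₀ H^H) + tr(H^H (σ² I + H Q₀ H^H)^{-1} H (Q − Q₀)), where both determinants are of Hermitian positive definite matrices (hence real and positive) and the trace term is real because H^H (σ² I + H Q₀ H^H)^{-1} H and Q − Q₀ are Hermitian. -/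
/-!
Write `B = Xᴴ X` with `X` invertible and `M = X⁻ᴴ A X⁻¹`. Then `det A = det B · det M` and
`tr (B⁻¹ (A - B)) = tr M - n`, so the inequality reduces to `log det M ≤ tr M - n` for a positive
definite `M`, which is `log λ ≤ λ - 1` summed over the eigenvalues of `M`.
-/

open Matrix ComplexOrder

namespace Matrix.PosDef

variable {n : Type*} [Fintype n] [DecidableEq n] {A B : Matrix n n ℂ}

theorem log_re_det_le_re_trace_sub_card_s3 (hA : A.PosDef) :
    Real.log A.det.re ≤ A.trace.re - Fintype.card n := by
  have hpos := hA.eigenvalues_pos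
  rw [hA.isHermitian.det_eq_prod_eigenvalues, hA.isHermitian.trace_eq_sum_eigenvalues]
  simp only [← RCLike.ofReal_prod, ← RCLike.ofReal_sum, ← RCLike.re_to_complex, RCLike.ofReal_re]
  rw [Real.log_prod fun i _ => (hpos i).ne']
  calc ∑ i, Real.log (hA.isHermitian.eigenvalues i)
      ≤ ∑ i, (hA.isHermitian.eigenvalues i - 1) :=
        Finset.sum_le_sum fun i _ => Real.log_le_sub_one_of_pos (hpos i)
    _ = _ := by simp [Finset.sum_sub_distrib]

theorem log_re_det_mul (hA : A.PosDef) (hB : B.PosDef) :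
    Real.log (A.det * B.det).re = Real.log A.det.re + Real.log B.det.re := by
  obtain ⟨hAre, hAim⟩ := Complex.pos_iff.mp hA.det_pos
  obtain ⟨hBre, -⟩ := Complex.pos_iff.mp hB.det_pos
  rw [Complex.mul_re, ← hAim, zero_mul, sub_zero, Real.log_mul hAre.ne' hBre.ne']

open scoped MatrixOrder Matrix.Norms.L2Operator in
theorem log_re_det_le_log_re_det_add_re_trace (hA : A.PosDef) (hB : B.PosDef) :
    Real.log A.det.re ≤ Real.log B.det.re + (B⁻¹ * (A - B)).trace.re := by
  obtain ⟨X, rfl⟩ : ∃ X, B = Xᴴ * X :=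
    CStarAlgebra.nonneg_iff_eq_star_mul_self.mp hB.posSemidef.nonneg
  have hX : IsUnit X := isUnit_of_mul_isUnit_right hB.isUnit
  set M := (X⁻¹)ᴴ * A * X⁻¹ with hM_def
  have hM : M.PosDef :=
    hA.conjTranspose_mul_mul_same (mulVec_injective_of_isUnit (isUnit_nonsing_inv_iff.mpr hX))
  have hdet : A.det = (Xᴴ * X).det * M.det := by
    simp only [hM_def, det_mul, det_conjTranspose, det_nonsing_inv, Ring.inverse_eq_inv,
      star_inv₀]
    field_simp [((isUnit_iff_isUnit_det X).mp hX).ne_zero]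
  have htr : ((Xᴴ * X)⁻¹ * (A - Xᴴ * X)).trace = M.trace - Fintype.card n := by
    rw [Matrix.mul_sub, nonsing_inv_mul _ ((isUnit_iff_isUnit_det _).mp hB.isUnit), trace_sub,
      trace_one, hM_def, trace_mul_cycle, Matrix.mul_inv_rev, conjTranspose_nonsing_inv]
  rw [hdet, log_re_det_mul hB hM, htr, Complex.sub_re, Complex.natCast_re]
  linarith [hM.log_re_det_le_re_trace_sub_card_s3]

end Matrix.PosDef

theorem Matrix.PosSemidef.posDef_ofReal_smul_one_add_mul_mul_conjTranspose
    {m n : Type*} [Fintype m] [Fintype n] [DecidableEq m] {c : ℝ} (hc : 0 < c)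
    {Q : Matrix n n ℂ} (hQ : Q.PosSemidef) (H : Matrix m n ℂ) :
    ((c : ℂ) • (1 : Matrix m m ℂ) + H * Q * Hᴴ).PosDef :=
  (PosDef.one.smul (Complex.zero_lt_real.mpr hc)).add_posSemidef (hQ.mul_mul_conjTranspose_same H)

/-- First-order (tangent-plane) majorization of the concave function
`Q ↦ log det(σ² I + H Q Hᴴ)` at a point `Q₀`. -/
theorem logdet_tangent_majorization {NR NT : ℕ} (σsq : ℝ) (hσ : 0 < σsq)
    (H : Matrix (Fin NR) (Fin NT) ℂ)
    (Q Q0 : Matrix (Fin NT) (Fin NT) ℂ)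
    (hQ : Q.PosSemidef) (hQ0 : Q0.PosSemidef) :
    Real.log (((σsq : ℂ) • (1 : Matrix (Fin NR) (Fin NR) ℂ) + H * Q * Hᴴ).det.re)
      ≤ Real.log (((σsq : ℂ) • (1 : Matrix (Fin NR) (Fin NR) ℂ) + H * Q0 * Hᴴ).det.re)
        + ((Hᴴ * ((σsq : ℂ) • (1 : Matrix (Fin NR) (Fin NR) ℂ) + H * Q0 * Hᴴ)⁻¹ * H *
            (Q - Q0)).trace).re := by
  set A := (σsq : ℂ) • (1 : Matrix (Fin NR) (Fin NR) ℂ) + H * Q * Hᴴ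
  set B := (σsq : ℂ) • (1 : Matrix (Fin NR) (Fin NR) ℂ) + H * Q0 * Hᴴ
  have hA : A.PosDef := hQ.posDef_ofReal_smul_one_add_mul_mul_conjTranspose hσ H
  have hB : B.PosDef := hQ0.posDef_ofReal_smul_one_add_mul_mul_conjTranspose hσ H
  have hAB : A - B = H * (Q - Q0) * Hᴴ := by
    simp only [A, B, Matrix.mul_sub, Matrix.sub_mul]
    abel
  have htr : (Hᴴ * B⁻¹ * H * (Q - Q0)).trace = (B⁻¹ * (A - B)).trace := by
    rw [hAB, Matrix.mul_assoc, Matrix.mul_assoc, trace_mul_comm, Matrix.mul_assoc,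
      Matrix.mul_assoc]
  rw [htr]
  exact hA.log_re_det_le_log_re_det_add_re_trace hB
end

section
/- Fix a vector h ∈ ℂᴺ. The function (x, X) ↦ x² · h^H X^{-1} h is jointly convex on the set ℝ × {N×N Hermitian positive definite complex matrices}; here h^H X^{-1} h is a real nonnegative number since X^{-1} is Hermitian positive definite. -/
open Matrix ComplexOrder

/-! For positive definite `X`, completing the square gives
`x² hᴴX⁻¹h = max_y (2x Re(hᴴy) − Re(yᴴXy))`, the maximum being attained at `y = x X⁻¹h`.
Each function under the maximum is linear in `(x, X)`, and a pointwise maximum of convex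
functions is convex. -/

section

variable {𝕜 E β ι : Type*} [Semiring 𝕜] [PartialOrder 𝕜] [AddCommMonoid E] [SMul 𝕜 E]
  [AddCommMonoid β] [PartialOrder β] [IsOrderedAddMonoid β] [Module 𝕜 β] [PosSMulMono 𝕜 β]

theorem convexOn_of_forall_le_of_exists_eq {s : Set E} {f : E → β} {g : ι → E → β}
    (hs : Convex 𝕜 s) (hg : ∀ i, ConvexOn 𝕜 s (g i)) (hle : ∀ i, ∀ x ∈ s, g i x ≤ f x)
    (hex : ∀ x ∈ s, ∃ i, f x = g i x) : ConvexOn 𝕜 s f := by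
  refine ⟨hs, fun x hx y hy a b ha hb hab => ?_⟩
  obtain ⟨i, hi⟩ := hex _ (hs hx hy ha hb hab)
  calc f (a • x + b • y) = g i (a • x + b • y) := hi
    _ ≤ a • g i x + b • g i y := (hg i).2 hx hy ha hb hab
    _ ≤ a • f x + b • f y := by gcongr <;> exact hle i _ ‹_›

end

theorem Matrix.convex_setOf_posDef {n 𝕜 : Type*} [Fintype n] [RCLike 𝕜] :
    Convex ℝ {X : Matrix n n 𝕜 | X.PosDef} := by
  intro A hA B hB a b ha hb hab
  rcases ha.eq_or_lt with rfl | ha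
  · simpa [show b = 1 by linarith] using hB
  · exact (hA.smul ha).add_posSemidef (hB.posSemidef.smul hb)

variable {n : Type*} [Fintype n] [DecidableEq n]

noncomputable def matrixFractional (h : n → ℂ) (p : ℝ × Matrix n n ℂ) : ℝ :=
  p.1 ^ 2 * (star h ⬝ᵥ p.2⁻¹ *ᵥ h).re

def matrixFractionalMinorant (h y : n → ℂ) : ℝ × Matrix n n ℂ →ₗ[ℝ] ℝ where
  toFun p := 2 * p.1 * (star h ⬝ᵥ y).re - (star y ⬝ᵥ p.2 *ᵥ y).re
  map_add' p q := by
    simp only [Prod.fst_add, Prod.snd_add, add_mulVec, dotProduct_add, Complex.add_re]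
    ring
  map_smul' c p := by
    simp only [Prod.smul_fst, Prod.smul_snd, smul_mulVec, dotProduct_smul, Complex.smul_re,
      smul_eq_mul, RingHom.id_apply]
    ring

theorem re_dotProduct_mulVec_sub_smul_inv_mulVec (h y : n → ℂ) (x : ℝ)
    {X : Matrix n n ℂ} (hX : X.IsHermitian) (hXu : IsUnit X) :
    (star (y - (x : ℂ) • X⁻¹ *ᵥ h) ⬝ᵥ X *ᵥ (y - (x : ℂ) • X⁻¹ *ᵥ h)).re
      = matrixFractional h (x, X) - matrixFractionalMinorant h y (x, X) := by
  set w := X⁻¹ *ᵥ h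
  have hXw : X *ᵥ w = h := by
    rw [mulVec_mulVec, mul_nonsing_inv X (X.isUnit_iff_isUnit_det.mp hXu), one_mulVec]
  have hwX : ∀ v, star w ⬝ᵥ X *ᵥ v = star h ⬝ᵥ v := fun v => by
    rw [dotProduct_mulVec, ← hX.eq, ← star_mulVec, hXw]
  have expand : star (y - (x : ℂ) • w) ⬝ᵥ X *ᵥ (y - (x : ℂ) • w)
      = star y ⬝ᵥ X *ᵥ y - x * (star y ⬝ᵥ h) - x * (star h ⬝ᵥ y)
        + x * x * (star h ⬝ᵥ w) := by
    have hwh : star w ⬝ᵥ h = star h ⬝ᵥ w := by rw [← hwX w, hXw]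
    rw [mulVec_sub, mulVec_smul, hXw, star_sub, star_smul]
    simp only [sub_dotProduct, dotProduct_sub, smul_dotProduct, dotProduct_smul, smul_eq_mul,
      Complex.star_def, Complex.conj_ofReal, hwX, hwh]
    ring
  have hre : (star y ⬝ᵥ h).re = (star h ⬝ᵥ y).re := by
    rw [← star_star h, star_dotProduct]
    simp
  rw [expand]
  simp only [matrixFractional, matrixFractionalMinorant, LinearMap.coe_mk, AddHom.coe_mk,
    Complex.sub_re, Complex.add_re, Complex.re_ofReal_mul, ← Complex.ofReal_mul, hre]
  ring

theorem matrixFractionalMinorant_le (h y : n → ℂ) (x : ℝ) {X : Matrix n n ℂ} (hX : X.PosDef) :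
    matrixFractionalMinorant h y (x, X) ≤ matrixFractional h (x, X) := by
  rw [← sub_nonneg,
    ← re_dotProduct_mulVec_sub_smul_inv_mulVec h y x hX.isHermitian hX.isUnit]
  exact hX.posSemidef.re_dotProduct_nonneg _

theorem matrixFractional_eq_minorant (h : n → ℂ) (x : ℝ) {X : Matrix n n ℂ}
    (hX : X.IsHermitian) (hXu : IsUnit X) :
    matrixFractional h (x, X) = matrixFractionalMinorant h ((x : ℂ) • X⁻¹ *ᵥ h) (x, X) := by
  rw [← sub_eq_zero, ← re_dotProduct_mulVec_sub_smul_inv_mulVec h _ x hX hXu]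
  simp

/-- Joint convexity of the matrix-fractional function
`(x, X) ↦ x² · hᴴ X⁻¹ h` on `ℝ × {Hermitian positive definite matrices}`. -/
theorem matrixFractional_convexOn {N : ℕ} (h : Fin N → ℂ) :
    ConvexOn ℝ {p : ℝ × Matrix (Fin N) (Fin N) ℂ | p.2.PosDef}
      (fun p => p.1 ^ 2 * (star h ⬝ᵥ (p.2⁻¹).mulVec h).re) := by
  have hs : Convex ℝ {p : ℝ × Matrix (Fin N) (Fin N) ℂ | p.2.PosDef} :=
    (convex_setOf_posDef (n := Fin N) (𝕜 := ℂ)).linear_preimage (LinearMap.snd ℝ ℝ _)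
  show ConvexOn ℝ _ (matrixFractional h)
  exact convexOn_of_forall_le_of_exists_eq hs
    (fun y => (matrixFractionalMinorant h y).convexOn hs)
    (fun y p hp => matrixFractionalMinorant_le h y p.1 hp)
    (fun p hp => ⟨_, matrixFractional_eq_minorant h p.1 hp.isHermitian hp.isUnit⟩)
end

section
/- Let h ∈ ℂᴺ, let x, x₀ be real numbers, and let X, X₀ be N×N Hermitian positive definite complex matrices. Then x² · h^H X^{-1} h ≥ x₀² · h^H X₀^{-1} h + 2 x₀ · (h^H X₀^{-1} h) · (x − x₀) − x₀² · h^H X₀^{-1} (X − X₀) X₀^{-1} h, where every quantity appearing is real (since X, X₀, X − X₀ and the inverses are Hermitian). -/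
open Matrix ComplexOrder

/-- First-order (tangent) global lower bound of the jointly convex
matrix-fractional function `(x, X) ↦ x² hᴴ X⁻¹ h` at `(x₀, X₀)`. -/
theorem matrixFractional_tangent_lower_bound {N : ℕ} (h : Fin N → ℂ)
    (x x0 : ℝ) (X X0 : Matrix (Fin N) (Fin N) ℂ)
    (hX : X.PosDef) (hX0 : X0.PosDef) :
    x0 ^ 2 * (star h ⬝ᵥ (X0⁻¹).mulVec h).re
      + 2 * x0 * (star h ⬝ᵥ (X0⁻¹).mulVec h).re * (x - x0)
      - x0 ^ 2 * (star h ⬝ᵥ (X0⁻¹ * (X - X0) * X0⁻¹).mulVec h).re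
    ≤ x ^ 2 * (star h ⬝ᵥ (X⁻¹).mulVec h).re := by
  have hXd : IsUnit X.det := (Matrix.isUnit_iff_isUnit_det X).mp hX.isUnit
  have hX0d : IsUnit X0.det := (Matrix.isUnit_iff_isUnit_det X0).mp hX0.isUnit
  set a : Fin N → ℂ := X⁻¹.mulVec h with ha
  set b : Fin N → ℂ := X0⁻¹.mulVec h with hb
  set w : Fin N → ℂ := (x : ℂ) • a - (x0 : ℂ) • b with hw
  have hstara : star a = star h ᵥ* X⁻¹ := by
    rw [ha, star_mulVec, hX.1.inv.eq]
  have hstarb : star b = star h ᵥ* X0⁻¹ := by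
    rw [hb, star_mulVec, hX0.1.inv.eq]
  have hsaX : star a ᵥ* X = star h := by
    rw [hstara, vecMul_vecMul, Matrix.nonsing_inv_mul X hXd, vecMul_one]
  have hXa : X.mulVec a = h := by
    rw [ha, mulVec_mulVec, Matrix.mul_nonsing_inv X hXd, one_mulVec]
  -- the four scalar quantities
  have t1 : star a ⬝ᵥ X.mulVec a = star h ⬝ᵥ a := by
    rw [dotProduct_mulVec, hsaX]
  have t2 : star a ⬝ᵥ X.mulVec b = star h ⬝ᵥ b := by
    rw [dotProduct_mulVec, hsaX]
  have t3 : (star b ⬝ᵥ X.mulVec a).re = (star h ⬝ᵥ b).re := by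
    rw [hXa, star_dotProduct, Complex.star_def, Complex.conj_re]
  have t4 : star b ⬝ᵥ X.mulVec b = star h ⬝ᵥ (X0⁻¹ * X * X0⁻¹).mulVec h := by
    rw [dotProduct_mulVec, hstarb, vecMul_vecMul, hb, ← dotProduct_mulVec,
      mulVec_mulVec, Matrix.mul_assoc]
  -- quadratic form nonnegativity
  have hquad : 0 ≤ (star w ⬝ᵥ X.mulVec w).re := hX.posSemidef.re_dotProduct_nonneg w
  have hexp : (star w ⬝ᵥ X.mulVec w).re
      = x ^ 2 * (star h ⬝ᵥ a).re - 2 * x * x0 * (star h ⬝ᵥ b).re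
        + x0 ^ 2 * (star h ⬝ᵥ (X0⁻¹ * X * X0⁻¹).mulVec h).re := by
    have hsw : star w = (x : ℂ) • star a - (x0 : ℂ) • star b := by
      rw [hw, star_sub, star_smul, star_smul]
      simp
    rw [hw, hsw, mulVec_sub, mulVec_smul, mulVec_smul, sub_dotProduct,
      smul_dotProduct, smul_dotProduct, dotProduct_sub, dotProduct_sub,
      dotProduct_smul, dotProduct_smul, dotProduct_smul, dotProduct_smul,
      t1, t2, t4]
    simp only [smul_eq_mul, Complex.sub_re, Complex.mul_re, Complex.ofReal_re,
      Complex.ofReal_im, zero_mul, sub_zero, t3]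
    ring
  -- rewrite the tangent term
  have htan : (star h ⬝ᵥ (X0⁻¹ * (X - X0) * X0⁻¹).mulVec h).re
      = (star h ⬝ᵥ (X0⁻¹ * X * X0⁻¹).mulVec h).re - (star h ⬝ᵥ b).re := by
    have : X0⁻¹ * (X - X0) * X0⁻¹ = X0⁻¹ * X * X0⁻¹ - X0⁻¹ := by
      rw [Matrix.mul_sub, Matrix.sub_mul, Matrix.nonsing_inv_mul X0 hX0d,
        Matrix.one_mul]
    rw [this, sub_mulVec, dotProduct_sub, Complex.sub_re, hb]
  rw [htan]
  nlinarith [hquad, hexp]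
end

section
/- Let E be a finite-dimensional real inner product space, let S ⊆ E be a nonempty convex set, and let h, g : E → ℝ be differentiable on an open set containing S, with g concave. Suppose x* ∈ S maximizes over S the function x ↦ h(x) − (g(x*) + ⟨∇g(x*), x − x*⟩). Then for every x' ∈ S one has ⟨∇g(x*) − ∇h(x*), x' − x*⟩ ≥ 0; that is, x* satisfies the first-order necessary condition for local optimality of the problem of maximizing h − g over S. -/
open InnerProductSpace

theorem IsMaxOn.inner_gradient_sub_nonpos {E : Type*} [NormedAddCommGroup E]
    [InnerProductSpace ℝ E] [CompleteSpace E] {f : E → ℝ} {f' a y : E} {s : Set E}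
    (hmax : IsMaxOn f s a) (hf : HasGradientAt f f' a) (hs : Convex ℝ s) (ha : a ∈ s)
    (hy : y ∈ s) : inner ℝ f' (y - a) ≤ 0 := by
  simpa using hmax.localize.hasFDerivWithinAt_nonpos hf.hasFDerivAt.hasFDerivWithinAt
    (sub_mem_posTangentConeAt_of_segment_subset (hs.segment_subset ha hy))

theorem HasGradientAt.sub_inner_left {E : Type*} [NormedAddCommGroup E]
    [InnerProductSpace ℝ E] [CompleteSpace E] {f : E → ℝ} {f' a : E} (v : E)
    (hf : HasGradientAt f f' a) :
    HasGradientAt (fun x => f x - inner ℝ v x) (f' - v) a := by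
  rw [hasGradientAt_iff_hasFDerivAt, map_sub]
  exact hf.hasFDerivAt.sub (toDual ℝ E v).hasFDerivAt

theorem mm_fixed_point_stationarity_general {E : Type*} [NormedAddCommGroup E]
    [InnerProductSpace ℝ E] [FiniteDimensional ℝ E]
    (S U : Set E) (hSconv : Convex ℝ S)
    (hSU : S ⊆ U)
    (h g : E → ℝ) (Gh Gg : E → E)
    (hhdiff : ∀ x ∈ U, HasGradientAt h (Gh x) x)
    (xs : E) (hxs : xs ∈ S)
    (hmax : ∀ y ∈ S,
      h y - (g xs + (inner ℝ (Gg xs) (y - xs) : ℝ)) ≤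
        h xs - (g xs + (inner ℝ (Gg xs) (xs - xs) : ℝ))) :
    ∀ x' ∈ S, (0 : ℝ) ≤ inner ℝ (Gg xs - Gh xs) (x' - xs) := by
  intro x' hx'
  -- The affine majorant of `g` differs from `⟪∇g x*, ·⟫` by a constant.
  have hsurrogate : IsMaxOn (fun y => h y - inner ℝ (Gg xs) y) S xs := fun y hy => by
    have hy_max := hmax y hy
    simp only [inner_sub_right, sub_self, inner_zero_right] at hy_max
    exact (by linarith : h y - inner ℝ (Gg xs) y ≤ h xs - inner ℝ (Gg xs) xs)
  have hfirst_order := hsurrogate.inner_gradient_sub_nonpos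
    ((hhdiff xs (hSU hxs)).sub_inner_left (Gg xs)) hSconv hxs hx'
  rw [inner_sub_left] at hfirst_order ⊢
  linarith

/-- A fixed point of the majorize–minimize iteration satisfies the first-order
necessary (variational inequality) condition for local optimality of the
problem of maximizing `h − g` over the convex set `S`: if `x*` maximizes over
`S` the surrogate `x ↦ h x − (g x* + ⟪∇g x*, x − x*⟫)`, then
`⟪∇g x* − ∇h x*, x' − x*⟫ ≥ 0` for all `x' ∈ S`. -/
theorem mm_fixed_point_stationarity {E : Type*} [NormedAddCommGroup E]
    [InnerProductSpace ℝ E] [FiniteDimensional ℝ E]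
    (S U : Set E) (hSne : S.Nonempty) (hSconv : Convex ℝ S)
    (hUopen : IsOpen U) (hUconv : Convex ℝ U) (hSU : S ⊆ U)
    (h g : E → ℝ) (Gh Gg : E → E)
    (hgconc : ConcaveOn ℝ U g)
    (hhdiff : ∀ x ∈ U, HasGradientAt h (Gh x) x)
    (hgdiff : ∀ x ∈ U, HasGradientAt g (Gg x) x)
    (xs : E) (hxs : xs ∈ S)
    (hmax : ∀ y ∈ S,
      h y - (g xs + (inner ℝ (Gg xs) (y - xs) : ℝ)) ≤
        h xs - (g xs + (inner ℝ (Gg xs) (xs - xs) : ℝ))) :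
    ∀ x' ∈ S, (0 : ℝ) ≤ inner ℝ (Gg xs - Gh xs) (x' - xs) :=
  mm_fixed_point_stationarity_general S U hSconv hSU h g Gh Gg hhdiff xs hxs hmax
end
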